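/- arXiv:2108.11698 — 2 statements merged into one kernel-verified Lean document; each statement's English description precedes it below -/
import Mathlib

section
/- Let (X, d) be a proper, uniquely geodesic, straight metric space with basepoint b, let γ be a geodesic ray based at b, and let p ∈ X be a point not lying in the image of the bi-infinite extension of γ. Then the function t ↦ h(γ t)(p) = d(γ t, p) − d(γ t, b) is strictly decreasing in t on [0, ∞): for all 0 ≤ s < t one has h(γ t)(p) < h(γ s)(p). -/
open Filter Topology
open scoped NNReal ENNReal

variable {X : Type*} [MetricSpace X]

/-- `γ` restricted to the set `s ⊆ ℝ` is a (unit-speed) geodesic: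
`dist (γ u) (γ v) = |u - v|` for all `u, v ∈ s`. -/
def IsGeodesicOn (γ : ℝ → X) (s : Set ℝ) : Prop :=
  ∀ u ∈ s, ∀ v ∈ s, dist (γ u) (γ v) = |u - v|

/-- `X` is uniquely geodesic: any two distinct points are joined by a geodesic
parametrized on `[0, dist a c]`, and any two such geodesics agree on that interval. -/
def UniquelyGeodesic (X : Type*) [MetricSpace X] : Prop :=
  ∀ a c : X, a ≠ c →
    ∃ γ : ℝ → X,
      (IsGeodesicOn γ (Set.Icc 0 (dist a c)) ∧ γ 0 = a ∧ γ (dist a c) = c) ∧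
        ∀ γ' : ℝ → X,
          (IsGeodesicOn γ' (Set.Icc 0 (dist a c)) ∧ γ' 0 = a ∧ γ' (dist a c) = c) →
            Set.EqOn γ' γ (Set.Icc 0 (dist a c))

/-- `X` is straight: every geodesic defined on a nondegenerate closed interval extends to a
unique bi-infinite geodesic (an isometric embedding of `ℝ`). -/
def Straight (X : Type*) [MetricSpace X] : Prop :=
  ∀ (γ : ℝ → X) (a c : ℝ), a < c → IsGeodesicOn γ (Set.Icc a c) →
    ∃! γ' : ℝ → X, Isometry γ' ∧ Set.EqOn γ' γ (Set.Icc a c)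

/-- The space `D_b` of geodesic rays based at `b`, as a subspace of `C(ℝ≥0, X)`
(with the compact-open topology, i.e. uniform convergence on compact sets). -/
abbrev GeodesicRay (X : Type*) [MetricSpace X] (b : X) :=
  {γ : C(ℝ≥0, X) // Isometry ⇑γ ∧ γ 0 = b}

/-- The horofunction embedding `h : X → C(X, ℝ)`, `h x y = d(x, y) - d(x, b)`. -/
noncomputable def horo (b x : X) : C(X, ℝ) :=
  ⟨fun y => dist x y - dist x b,
    (continuous_const.dist continuous_id).sub continuous_const⟩

/-- The horoboundary of `X` (with basepoint `b`): the closure of `h(X)` in `C(X, ℝ)`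
minus `h(X)`. -/
def horoboundary (b : X) : Set C(X, ℝ) :=
  closure (Set.range (horo b)) \ Set.range (horo b)

/-- The setoid on `D_b × M` identifying all points whose second coordinate is `0`. -/
def collapseSetoid (X : Type*) [MetricSpace X] (b : X) (M : Type*) [Zero M] :
    Setoid (GeodesicRay X b × M) where
  r p q := p = q ∨ (p.2 = 0 ∧ q.2 = 0)
  iseqv := by
    refine ⟨fun _ => Or.inl rfl, ?_, ?_⟩
    · rintro p q (rfl | ⟨h1, h2⟩)
      · exact Or.inl rfl
      · exact Or.inr ⟨h2, h1⟩
    · rintro p q r (rfl | ⟨h1, h2⟩) (rfl | ⟨h3, h4⟩)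
      · exact Or.inl rfl
      · exact Or.inr ⟨h3, h4⟩
      · exact Or.inr ⟨h1, h2⟩
      · exact Or.inr ⟨h1, h4⟩

/-- The visual compactification `X̄_b = (D_b × [0, ∞]) / (D_b × {0})`. -/
abbrev VisualCompactification (X : Type*) [MetricSpace X] (b : X) :=
  Quotient (collapseSetoid X b ℝ≥0∞)

/-- `X` is C¹ along geodesics: for a bi-infinite geodesic `γ` and a point `p` off `γ`,
`t ↦ d(γ t, p)` is differentiable, and the derivative depends continuously on `(t, p)`. -/
def C1AlongGeodesics (X : Type*) [MetricSpace X] : Prop :=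
  ∀ γ : ℝ → X, Isometry γ →
    (∀ p, p ∉ Set.range γ → ∀ t : ℝ, DifferentiableAt ℝ (fun s => dist (γ s) p) t) ∧
      ContinuousOn (fun q : ℝ × X => deriv (fun s => dist (γ s) q.2) q.1)
        {q : ℝ × X | q.2 ∉ Set.range γ}

/-- `X` has constant distance variation: for distinct bi-infinite geodesics `γ, η` with
`γ 0 = η 0`, either `(d/dt) d(γ t, η s)|_{t=0}` exists for all `s > 0` and is independent
of `s`, or it exists for no `s > 0`. -/
def ConstantDistanceVariation (X : Type*) [MetricSpace X] : Prop :=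
  ∀ γ η : ℝ → X, Isometry γ → Isometry η → γ 0 = η 0 → γ ≠ η →
    ((∀ s : ℝ, 0 < s → DifferentiableAt ℝ (fun t => dist (γ t) (η s)) 0) ∧
        ∀ s s' : ℝ, 0 < s → 0 < s' →
          deriv (fun t => dist (γ t) (η s)) 0 = deriv (fun t => dist (γ t) (η s')) 0) ∨
      ∀ s : ℝ, 0 < s → ¬ DifferentiableAt ℝ (fun t => dist (γ t) (η s)) 0

/-!
If equality held in `d(γ t, p) ≤ (t - s) + d(γ s, p)`, the geodesic from `p` to `γ s` followed by
`γ` on `[s, t]` would be a geodesic from `p` to `γ t`. It contains the segment `γ [s, t]`, so by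
straightness it runs along `γ` itself, forcing `p` onto `γ`. For a ray from `b` the term
`d(γ t, b) = t` then absorbs `t - s`.
-/

namespace IsGeodesicOn

theorem mono {γ : ℝ → X} {s t : Set ℝ} (hγ : IsGeodesicOn γ t) (hst : s ⊆ t) :
    IsGeodesicOn γ s :=
  fun u hu v hv => hγ u (hst hu) v (hst hv)

theorem congr {γ η : ℝ → X} {s : Set ℝ} (hγ : IsGeodesicOn γ s) (h : Set.EqOn γ η s) :
    IsGeodesicOn η s :=
  fun u hu v hv => by rw [← h hu, ← h hv, hγ u hu v hv]

theorem dist_eq_sub_of_le {γ : ℝ → X} {s : Set ℝ} (hγ : IsGeodesicOn γ s) {u v : ℝ}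
    (hu : u ∈ s) (hv : v ∈ s) (huv : u ≤ v) : dist (γ u) (γ v) = v - u := by
  rw [hγ u hu v hv, abs_of_nonpos (sub_nonpos.2 huv), neg_sub]

theorem comp_sub_const {γ : ℝ → X} {s : Set ℝ} (hγ : IsGeodesicOn γ s) (c : ℝ) :
    IsGeodesicOn (fun u => γ (u - c)) ((· - c) ⁻¹' s) :=
  fun u hu v hv => by rw [hγ _ hu _ hv, sub_sub_sub_cancel_right]

theorem Icc_trans {γ : ℝ → X} {a b c : ℝ} (hab : IsGeodesicOn γ (Set.Icc a b))
    (hbc : IsGeodesicOn γ (Set.Icc b c)) (hac : dist (γ a) (γ c) = c - a) :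
    IsGeodesicOn γ (Set.Icc a c) := by
  intro u hu v hv
  wlog huv : u ≤ v generalizing u v
  · rw [dist_comm, abs_sub_comm]
    exact this v hv u hu (le_of_not_ge huv)
  rw [abs_of_nonpos (sub_nonpos.2 huv), neg_sub]
  obtain ⟨hau, -⟩ := hu
  obtain ⟨-, hvc⟩ := hv
  rcases le_total v b with hvb | hbv
  · exact hab.dist_eq_sub_of_le ⟨hau, huv.trans hvb⟩ ⟨hau.trans huv, hvb⟩ huv
  rcases le_total b u with hbu | hub
  · exact hbc.dist_eq_sub_of_le ⟨hbu, huv.trans hvc⟩ ⟨hbv, hvc⟩ huv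
  have hdau := hab.dist_eq_sub_of_le ⟨le_rfl, hau.trans hub⟩ ⟨hau, hub⟩ hau
  have hdub := hab.dist_eq_sub_of_le ⟨hau, hub⟩ ⟨hau.trans hub, le_rfl⟩ hub
  have hdbv := hbc.dist_eq_sub_of_le ⟨le_rfl, hbv.trans hvc⟩ ⟨hbv, hvc⟩ hbv
  have hdvc := hbc.dist_eq_sub_of_le ⟨hbv, hvc⟩ ⟨hbv.trans hvc, le_rfl⟩ hvc
  have hupper := dist_triangle (γ u) (γ b) (γ v)
  have hlower := dist_triangle4 (γ a) (γ u) (γ v) (γ c)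
  linarith

end IsGeodesicOn

theorem Isometry.isGeodesicOn {γ : ℝ → X} (hγ : Isometry γ) (s : Set ℝ) : IsGeodesicOn γ s :=
  fun u _ v _ => by rw [hγ.dist_eq, Real.dist_eq]

theorem Straight.eqOn_of_eqOn_Icc (hS : Straight X) {γ η : ℝ → X} (hγ : Isometry γ)
    {a c a' c' : ℝ} (hac : a < c) (ha' : a' ≤ a) (hc' : c ≤ c')
    (hη : IsGeodesicOn η (Set.Icc a' c')) (hηγ : Set.EqOn η γ (Set.Icc a c)) :
    Set.EqOn η γ (Set.Icc a' c') := by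
  have hsub : Set.Icc a c ⊆ Set.Icc a' c' := Set.Icc_subset_Icc ha' hc'
  obtain ⟨η', ⟨hη'iso, hη'η⟩, -⟩ := hS η a' c' (by linarith) hη
  have hη'γ : η' = γ := (hS γ a c hac (hγ.isGeodesicOn _)).unique
    ⟨hη'iso, fun u hu => (hη'η (hsub hu)).trans (hηγ hu)⟩ ⟨hγ, Set.eqOn_refl γ _⟩
  exact fun u hu => (hη'η hu).symm.trans (congrFun hη'γ u)

theorem Isometry.dist_lt_sub_add_dist (hU : UniquelyGeodesic X) (hS : Straight X)
    {γ : ℝ → X} (hγ : Isometry γ) {p : X} (hp : p ∉ Set.range γ) {s t : ℝ} (hst : s < t) :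
    dist (γ t) p < t - s + dist (γ s) p := by
  have hγst := (hγ.isGeodesicOn Set.univ).dist_eq_sub_of_le trivial trivial hst.le
  refine lt_of_le_of_ne ?_ fun heq => hp ?_
  · linarith [dist_triangle (γ t) (γ s) p, dist_comm (γ s) (γ t)]
  have hps : p ≠ γ s := fun h => hp ⟨s, h.symm⟩
  obtain ⟨σ, ⟨hσ, hσ0, hσd⟩, -⟩ := hU p (γ s) hps
  set d := dist p (γ s)
  have hd : 0 < d := dist_pos.2 hps
  let η : ℝ → X := fun u => if s ≤ u then γ u else σ (u - (s - d))
  have hηγ : Set.EqOn η γ (Set.Icc s t) := fun u hu => if_pos hu.1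
  have hση : Set.EqOn (fun u => σ (u - (s - d))) η (Set.Icc (s - d) s) := by
    intro u hu
    rcases hu.2.lt_or_eq with hus | rfl
    · exact (if_neg (not_le.2 hus)).symm
    · simp only [η, le_rfl, if_pos, sub_sub_cancel, hσd]
  have hη₁ : IsGeodesicOn η (Set.Icc (s - d) s) :=
    ((hσ.comp_sub_const (s - d)).mono fun u hu =>
      ⟨sub_nonneg.2 hu.1, by linarith [hu.2]⟩).congr hση
  have hη₂ : IsGeodesicOn η (Set.Icc s t) := (hγ.isGeodesicOn _).congr hηγ.symm
  have hηp : η (s - d) = p := by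
    rw [← hση ⟨le_rfl, by linarith⟩]
    simp only [sub_self, hσ0]
  have hη : IsGeodesicOn η (Set.Icc (s - d) t) := by
    refine hη₁.Icc_trans hη₂ ?_
    rw [hηp, hηγ ⟨hst.le, le_rfl⟩, dist_comm, heq, dist_comm (γ s)]
    ring
  refine ⟨s - d, ?_⟩
  rw [← hηp]
  exact (hS.eqOn_of_eqOn_Icc hγ hst (by linarith) le_rfl hη hηγ ⟨le_rfl, by linarith⟩).symm

theorem statement2_general (hU : UniquelyGeodesic X) (hS : Straight X) (b : X)
    (γ : GeodesicRay X b) (γext : ℝ → X) (hext : Isometry γext)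
    (hagree : ∀ t : ℝ≥0, γext (t : ℝ) = γ.1 t)
    (p : X) (hp : p ∉ Set.range γext) :
    ∀ s t : ℝ≥0, s < t →
      dist (γ.1 t) p - dist (γ.1 t) b < dist (γ.1 s) p - dist (γ.1 s) b := by
  intro s t hst
  have hb : γext 0 = b := by simpa [γ.2.2] using hagree 0
  have hdist_b (u : ℝ≥0) : dist (γ.1 u) b = u := by
    rw [← hagree u, ← hb, hext.dist_eq, Real.dist_eq, sub_zero, abs_of_nonneg u.coe_nonneg]
  have key := hext.dist_lt_sub_add_dist hU hS hp (NNReal.coe_lt_coe.2 hst)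
  rw [hagree, hagree] at key
  rw [hdist_b, hdist_b]
  linarith

/-- If `γ` is a geodesic ray based at `b` and `p` does not lie on the image of the
bi-infinite extension of `γ`, then `t ↦ h (γ t) p = d(γ t, p) - d(γ t, b)` is strictly
decreasing on `[0, ∞)`. -/
theorem statement2 [ProperSpace X] (hU : UniquelyGeodesic X) (hS : Straight X) (b : X)
    (γ : GeodesicRay X b) (γext : ℝ → X) (hext : Isometry γext)
    (hagree : ∀ t : ℝ≥0, γext (t : ℝ) = γ.1 t)
    (p : X) (hp : p ∉ Set.range γext) :
    ∀ s t : ℝ≥0, s < t →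
      dist (γ.1 t) p - dist (γ.1 t) b < dist (γ.1 s) p - dist (γ.1 s) b :=
  statement2_general hU hS b γ γext hext hagree p hp
end

section
/- Let (X, d) be a proper, uniquely geodesic, straight metric space with basepoint b, and let ξ lie in the horoboundary of X. Then for every point p ∈ X there exists exactly one geodesic ray γ based at p such that ξ(γ(t)) = ξ(p) − t for all t ≥ 0. -/
/-!
Approximate `ξ` by horofunctions `horo b x` along an ultrafilter; since `ξ` is not itself of this
form and `X` is proper, the points `x` leave every compact set. Extend the geodesic from `p` to `x`
to a bi-infinite geodesic `σₓ` with `σₓ 0 = p`; by properness the `σₓ` converge pointwise to a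
bi-infinite geodesic `Γ` through `p`, and `ξ (Γ t) = ξ p - t` for every real `t` because
`dist x (σₓ t) - dist x p = -t` once `dist p x ≥ t`. Its positive half is the required ray.
For uniqueness, a ray `γ` with the same property, prolonged backwards by `Γ`, is again a
bi-infinite geodesic: `ξ` is `1`-Lipschitz, so distances across `p` cannot shrink. Two such
prolongations agree on the negative half-line, hence everywhere by straightness.
-/

open Filter Topology
open scoped NNReal ENNReal

variable {X : Type*} [MetricSpace X]

open Set Metric

theorem exists_ultrafilter_tendsto_of_mem_closure_range {α β : Type*} [TopologicalSpace β]
    {f : α → β} {y : β} (hy : y ∈ closure (range f)) :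
    ∃ U : Ultrafilter α, Tendsto f U (𝓝 y) := by
  have := comap_neBot_iff_frequently.2 (mem_closure_iff_frequently.1 hy)
  exact ⟨Ultrafilter.of (comap f (𝓝 y)), tendsto_iff_comap.2 (Ultrafilter.of_le _)⟩

theorem Ultrafilter.le_cocompact_of_tendsto_notMem_range {α β : Type*} [TopologicalSpace α]
    [TopologicalSpace β] [T2Space β] {f : α → β} (hf : Continuous f) {U : Ultrafilter α}
    {y : β} (hU : Tendsto f U (𝓝 y)) (hy : y ∉ range f) : ↑U ≤ cocompact α := by
  by_contra h
  obtain ⟨K, hKU, hK⟩ := (disjoint_cocompact_right _).1 (U.disjoint_iff_not_le.2 h)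
  obtain ⟨a, -, ha⟩ := hK.ultrafilter_le_nhds U (le_principal_iff.2 hKU)
  exact hy ⟨a, tendsto_nhds_unique ((hf.tendsto a).mono_left ha) hU⟩

theorem exists_isometry_tendsto_of_eventually_isometry [ProperSpace X] {Y ι : Type*}
    [PseudoMetricSpace Y] (U : Ultrafilter ι) {σ : ι → Y → X} {y₀ : Y} {p : X}
    (hσ : ∀ᶠ i in U, Isometry (σ i) ∧ σ i y₀ = p) :
    ∃ Γ : Y → X, Isometry Γ ∧ Γ y₀ = p ∧ ∀ t, Tendsto (fun i => σ i t) U (𝓝 (Γ t)) := by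
  have hlim : ∀ t, ∃ q, Tendsto (fun i => σ i t) U (𝓝 q) := by
    intro t
    have hball : ∀ᶠ i in U, σ i t ∈ closedBall p (dist t y₀) := hσ.mono fun i hi => by
      rw [mem_closedBall, ← hi.2, hi.1.dist_eq]
    obtain ⟨q, -, hq⟩ :=
      (isCompact_closedBall p _).ultrafilter_le_nhds (U.map _) (le_principal_iff.2 hball)
    exact ⟨q, hq⟩
  choose Γ hΓ using hlim
  have hdist : ∀ s t, dist (Γ s) (Γ t) = dist s t := fun s t =>
    tendsto_nhds_unique (((hΓ s).dist (hΓ t)).congr' (hσ.mono fun i hi => hi.1.dist_eq s t))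
      tendsto_const_nhds
  exact ⟨Γ, Isometry.of_dist_eq hdist,
    tendsto_nhds_unique (hΓ y₀) (tendsto_const_nhds.congr' (hσ.mono fun i hi => hi.2.symm)), hΓ⟩

theorem Straight.exists_isometry_through (hS : Straight X) (hU : UniquelyGeodesic X) {p x : X}
    (h : p ≠ x) : ∃ σ : ℝ → X, Isometry σ ∧ σ 0 = p ∧ σ (dist p x) = x := by
  obtain ⟨g, ⟨hg, hg0, hgx⟩, -⟩ := hU p x h
  have hd : 0 < dist p x := dist_pos.2 h
  obtain ⟨σ, ⟨hσ, hσg⟩, -⟩ := hS g 0 (dist p x) hd hg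
  exact ⟨σ, hσ, (hσg ⟨le_rfl, hd.le⟩).trans hg0, (hσg ⟨hd.le, le_rfl⟩).trans hgx⟩

theorem Straight.eq_of_eqOn (hS : Straight X) {f g : ℝ → X} (hf : Isometry f) (hg : Isometry g)
    {a c : ℝ} (hac : a < c) (h : EqOn f g (Icc a c)) : f = g := by
  have hgeo : IsGeodesicOn g (Icc a c) := fun u _ v _ => by rw [hg.dist_eq, Real.dist_eq]
  obtain ⟨_, -, huniq⟩ := hS g a c hac hgeo
  exact (huniq f ⟨hf, h⟩).trans (huniq g ⟨hg, eqOn_refl _ _⟩).symm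

theorem continuous_horo (b : X) : Continuous (horo b) :=
  ContinuousMap.continuous_of_continuous_uncurry _ <| by
    change Continuous fun q : X × X => dist q.1 q.2 - dist q.1 b
    fun_prop

section Horofunction

variable {b : X} {l : Filter X} {ξ : C(X, ℝ)}

theorem tendsto_dist_sub_dist_of_tendsto_horo (hξ : Tendsto (horo b) l (𝓝 ξ)) (y z : X) :
    Tendsto (fun x => dist x y - dist x z) l (𝓝 (ξ y - ξ z)) := by
  have heval : ∀ y, Tendsto (fun x => dist x y - dist x b) l (𝓝 (ξ y)) := fun y =>
    ((continuous_eval_const y).tendsto ξ).comp hξ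
  exact ((heval y).sub (heval z)).congr fun x => by ring

theorem lipschitzWith_one_of_tendsto_horo [l.NeBot] (hξ : Tendsto (horo b) l (𝓝 ξ)) :
    LipschitzWith 1 ξ :=
  LipschitzWith.of_le_add fun y z => sub_le_iff_le_add'.1 <|
    le_of_tendsto' (tendsto_dist_sub_dist_of_tendsto_horo hξ y z) fun x => by
      linarith [dist_triangle x z y, dist_comm z y]

theorem apply_eq_sub_of_tendsto_isometry_through [l.NeBot] (hξ : Tendsto (horo b) l (𝓝 ξ))
    {p : X} (hfar : Tendsto (dist p) l atTop) {σ : X → ℝ → X}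
    (hσ : ∀ᶠ x in l, Isometry (σ x) ∧ σ x (dist p x) = x) {Γ : ℝ → X}
    (hΓ : ∀ t, Tendsto (fun x => σ x t) l (𝓝 (Γ t))) (t : ℝ) : ξ (Γ t) = ξ p - t := by
  have hclose : Tendsto (fun x => dist x (Γ t) - dist x (σ x t)) l (𝓝 0) := by
    have h := (tendsto_const_nhds (x := Γ t)).dist (hΓ t)
    rw [dist_self] at h
    refine squeeze_zero_norm (fun x => ?_) h
    rw [Real.norm_eq_abs, dist_comm x, dist_comm x]
    exact abs_dist_sub_le _ _ _
  have hshift : ∀ᶠ x in l, dist x (σ x t) - dist x p = -t := by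
    filter_upwards [hσ, hfar.eventually_ge_atTop t] with x ⟨hσx, hσxp⟩ hxt
    have h := hσx.dist_eq (dist p x) t
    rw [hσxp, Real.dist_eq, abs_of_nonneg (sub_nonneg.2 hxt)] at h
    rw [h, dist_comm x p]
    ring
  have hlim : Tendsto (fun x => dist x (Γ t) - dist x p) l (𝓝 (-t)) := by
    have h := hclose.add (tendsto_const_nhds.congr' (hshift.mono fun x hx => hx.symm))
    rw [zero_add] at h
    exact h.congr fun x => by ring
  linarith [tendsto_nhds_unique (tendsto_dist_sub_dist_of_tendsto_horo hξ (Γ t) p) hlim]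

end Horofunction

section Rays

variable {p : X}

theorem dist_geodesicRay_apply_base (γ : GeodesicRay X p) (t : ℝ≥0) : dist (γ.1 t) p = t := by
  have h := γ.2.1.dist_eq t 0
  rwa [γ.2.2, NNReal.dist_eq, NNReal.coe_zero, sub_zero, NNReal.abs_eq] at h

def Isometry.toGeodesicRay {Γ : ℝ → X} (hΓ : Isometry Γ) (h0 : Γ 0 = p) : GeodesicRay X p :=
  ⟨⟨fun t => Γ t, (hΓ.comp isometry_subtype_coe).continuous⟩, hΓ.comp isometry_subtype_coe,
    show Γ ((0 : ℝ≥0) : ℝ) = p by rwa [NNReal.coe_zero]⟩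

noncomputable def concatRay {α : Type*} (Γ : ℝ → α) (γ : ℝ≥0 → α) : ℝ → α :=
  fun t => if 0 ≤ t then γ t.toNNReal else Γ t

theorem concatRay_coe {α : Type*} (Γ : ℝ → α) (γ : ℝ≥0 → α) (t : ℝ≥0) :
    concatRay Γ γ t = γ t := by
  simp [concatRay]

theorem concatRay_of_neg {α : Type*} (Γ : ℝ → α) (γ : ℝ≥0 → α) {t : ℝ} (ht : t < 0) :
    concatRay Γ γ t = Γ t := by
  simp [concatRay, not_le.2 ht]

variable {ξ : C(X, ℝ)}

theorem isometry_concatRay (hξ : LipschitzWith 1 ξ) {Γ : ℝ → X} (hΓ : Isometry Γ) (hΓ0 : Γ 0 = p)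
    (hΓξ : ∀ t < 0, ξ (Γ t) = ξ p - t) (γ : GeodesicRay X p)
    (hγ : ∀ t : ℝ≥0, ξ (γ.1 t) = ξ p - t) : Isometry (concatRay Γ γ.1) := by
  have hmix : ∀ (w : ℝ≥0) (v : ℝ), v < 0 → dist (γ.1 w) (Γ v) = |(w : ℝ) - v| := by
    intro w v hv
    have hpv : dist p (Γ v) = -v := by
      rw [← hΓ0, hΓ.dist_eq, Real.dist_eq, zero_sub, abs_neg, abs_of_neg hv]
    have hub := dist_triangle (γ.1 w) p (Γ v)
    -- `ξ` drops by exactly `w - v` from `Γ v` to `γ w`, and it is `1`-Lipschitz.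
    have hlb := hξ.le_add_mul (Γ v) (γ.1 w)
    rw [hΓξ v hv, hγ w, dist_comm (Γ v), NNReal.coe_one, one_mul] at hlb
    rw [dist_geodesicRay_apply_base, hpv] at hub
    rw [abs_of_pos (by linarith [w.2])]
    linarith
  refine Isometry.of_dist_eq fun s t => ?_
  rw [Real.dist_eq]
  rcases le_or_gt 0 s with hs | hs <;> rcases le_or_gt 0 t with ht | ht
  · lift s to ℝ≥0 using hs
    lift t to ℝ≥0 using ht
    rw [concatRay_coe, concatRay_coe, γ.2.1.dist_eq, NNReal.dist_eq]
  · lift s to ℝ≥0 using hs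
    rw [concatRay_coe, concatRay_of_neg _ _ ht, hmix s t ht]
  · lift t to ℝ≥0 using ht
    rw [concatRay_coe, concatRay_of_neg _ _ hs, dist_comm, hmix t s hs, abs_sub_comm]
  · rw [concatRay_of_neg _ _ hs, concatRay_of_neg _ _ ht, hΓ.dist_eq, Real.dist_eq]

theorem GeodesicRay.eq_of_apply_eq_sub (hS : Straight X) (hξ : LipschitzWith 1 ξ) {Γ : ℝ → X}
    (hΓ : Isometry Γ) (hΓ0 : Γ 0 = p) (hΓξ : ∀ t < 0, ξ (Γ t) = ξ p - t)
    {γ γ' : GeodesicRay X p} (hγ : ∀ t : ℝ≥0, ξ (γ.1 t) = ξ p - t)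
    (hγ' : ∀ t : ℝ≥0, ξ (γ'.1 t) = ξ p - t) : γ = γ' := by
  have hneg : EqOn (concatRay Γ γ.1) (concatRay Γ γ'.1) (Icc (-2) (-1)) := fun t ht => by
    rw [concatRay_of_neg _ _ (by linarith [ht.2]), concatRay_of_neg _ _ (by linarith [ht.2])]
  have heq := hS.eq_of_eqOn (isometry_concatRay hξ hΓ hΓ0 hΓξ γ hγ)
    (isometry_concatRay hξ hΓ hΓ0 hΓξ γ' hγ') (by norm_num) hneg
  refine Subtype.ext (ContinuousMap.ext fun t => ?_)
  rw [← concatRay_coe Γ γ.1, ← concatRay_coe Γ γ'.1, heq]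

end Rays

/-- For every horofunction `ξ` and every point `p`, there is exactly one geodesic
ray `γ` based at `p` with `ξ (γ t) = ξ p - t` for all `t ≥ 0`. -/
theorem statement5 [ProperSpace X] (hU : UniquelyGeodesic X) (hS : Straight X) (b : X)
    (ξ : C(X, ℝ)) (hξ : ξ ∈ horoboundary b) :
    ∀ p : X, ∃! γ : GeodesicRay X p, ∀ t : ℝ≥0, ξ (γ.1 t) = ξ p - (t : ℝ) := by
  intro p
  obtain ⟨U, hUξ⟩ := exists_ultrafilter_tendsto_of_mem_closure_range hξ.1
  have hfar : Tendsto (dist p) U atTop := (tendsto_dist_left_cocompact_atTop p).comp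
    (U.le_cocompact_of_tendsto_notMem_range (continuous_horo b) hUξ hξ.2)
  have hne : ∀ᶠ x in U, p ≠ x := (hfar.eventually_gt_atTop 0).mono fun x hx => dist_pos.1 hx
  choose! σ hσ using fun x (hx : p ≠ x) => hS.exists_isometry_through hU hx
  obtain ⟨Γ, hΓ, hΓ0, hΓlim⟩ := exists_isometry_tendsto_of_eventually_isometry U
    (hne.mono fun x hx => ⟨(hσ x hx).1, (hσ x hx).2.1⟩)
  have hΓξ := apply_eq_sub_of_tendsto_isometry_through hUξ hfar
    (hne.mono fun x hx => ⟨(hσ x hx).1, (hσ x hx).2.2⟩) hΓlim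
  exact ⟨hΓ.toGeodesicRay hΓ0, fun t => hΓξ t, fun γ hγ =>
    GeodesicRay.eq_of_apply_eq_sub hS (lipschitzWith_one_of_tendsto_horo hUξ) hΓ hΓ0
      (fun t _ => hΓξ t) hγ fun t => hΓξ t⟩
end
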